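/- arXiv:2310.11907 — 3 statements merged into one kernel-verified Lean document; each statement's English description precedes it below -/
import Mathlib

section
/- Let Γ be a signed graph of order m and let Γ' = Γ − e be the signed graph obtained from Γ by deleting one edge e (of either sign). If (α_1, α_2, …, α_m) and (β_1, β_2, …, β_m) are the ordered Laplacian spectra of Γ and Γ' respectively, then β_p ≤ α_p ≤ β_p + 2 for every p = 1, 2, …, m. -/
open Polynomial

/-- A signed adjacency matrix: symmetric, zero diagonal, entries in {-1,0,1}. -/
def IsSignedAdj {n : ℕ} (A : Matrix (Fin n) (Fin n) ℝ) : Prop :=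
  A.IsSymm ∧ (∀ i, A i i = 0) ∧ ∀ i j, A i j = -1 ∨ A i j = 0 ∨ A i j = 1

/-- Degree of vertex `i`: number of neighbours. -/
noncomputable def deg {n : ℕ} (A : Matrix (Fin n) (Fin n) ℝ) (i : Fin n) : ℕ :=
  {j | A i j ≠ 0}.ncard

/-- Negative degree of vertex `i`. -/
noncomputable def negDeg {n : ℕ} (A : Matrix (Fin n) (Fin n) ℝ) (i : Fin n) : ℕ :=
  {j | A i j = -1}.ncard

/-- Positive degree of vertex `i`. -/
noncomputable def posDeg {n : ℕ} (A : Matrix (Fin n) (Fin n) ℝ) (i : Fin n) : ℕ :=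
  {j | A i j = 1}.ncard

/-- Laplacian matrix `L = D - A`. -/
noncomputable def lap {n : ℕ} (A : Matrix (Fin n) (Fin n) ℝ) : Matrix (Fin n) (Fin n) ℝ :=
  Matrix.diagonal (fun i => (deg A i : ℝ)) - A

/-- Net-Laplacian matrix `N = D± - A`, where `D±` is the diagonal of signed degrees. -/
noncomputable def netLap {n : ℕ} (A : Matrix (Fin n) (Fin n) ℝ) : Matrix (Fin n) (Fin n) ℝ :=
  Matrix.diagonal (fun i => ∑ j, A i j) - A

/-- Normalized net-Laplacian `D^{-1/2} N D^{-1/2}`. -/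
noncomputable def normNetLap {n : ℕ} (A : Matrix (Fin n) (Fin n) ℝ) :
    Matrix (Fin n) (Fin n) ℝ :=
  Matrix.diagonal (fun i => (Real.sqrt (deg A i))⁻¹) * netLap A *
    Matrix.diagonal (fun i => (Real.sqrt (deg A i))⁻¹)

/-- `μ` is the ordered (non-decreasing) spectrum of `M` : it is monotone and lists the
eigenvalues of `M` with multiplicity, i.e. the characteristic polynomial splits as
`∏ (X - μ i)`. -/
def IsOrderedSpectrum {n : ℕ} (M : Matrix (Fin n) (Fin n) ℝ) (μ : Fin n → ℝ) : Prop :=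
  Monotone μ ∧ M.charpoly = ∏ i, (X - C (μ i))

/-- Deleting the edge `uv`: set the `(u,v)` and `(v,u)` entries to `0`. -/
def deleteEdge {n : ℕ} (A : Matrix (Fin n) (Fin n) ℝ) (u v : Fin n) :
    Matrix (Fin n) (Fin n) ℝ :=
  Matrix.of fun i j => if (i = u ∧ j = v) ∨ (i = v ∧ j = u) then 0 else A i j

/-- Deleting the vertex `v`: principal submatrix omitting row/column `v`. -/
def deleteVertex {n : ℕ} (A : Matrix (Fin (n+1)) (Fin (n+1)) ℝ) (v : Fin (n+1)) :
    Matrix (Fin n) (Fin n) ℝ :=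
  A.submatrix v.succAbove v.succAbove

/-! Let `η = e_u - σ e_v` be the signed incidence vector of the deleted edge `e = uv` of
sign `σ`. Then `L(Γ) = L(Γ - e) + η ηᵀ` and `ηᵀη = 2`, so for every `x`
`0 ≤ xᵀ L(Γ) x - xᵀ L(Γ - e) x ≤ 2 xᵀx`. By the Courant–Fischer principle, a quadratic-form
inequality `xᵀNx ≤ xᵀMx + c xᵀx` forces `ν p ≤ μ p + c` between the ordered spectra, which
gives both bounds. -/

open Matrix

section Spectrum

variable {n : ℕ}

lemma Tuple.eq_comp_sort_of_monotone {α : Type*} [LinearOrder α] {f g : Fin n → α}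
    (hf : Monotone f) (h : Finset.univ.val.map f = Finset.univ.val.map g) :
    f = g ∘ Tuple.sort g := by
  have hperm : (List.ofFn f).Perm (List.ofFn (g ∘ Tuple.sort g)) := by
    refine List.Perm.trans ?_ ((Tuple.sort g).ofFn_comp_perm g).symm
    simpa only [Fin.univ_val_map, Multiset.coe_eq_coe] using h
  exact List.ofFn_injective <|
    hperm.eq_of_sortedLE hf.sortedLE_ofFn (Tuple.monotone_sort g).sortedLE_ofFn

lemma exists_orthogonal_eq_mul_diagonal_mul_transpose {M : Matrix (Fin n) (Fin n) ℝ}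
    (hM : M.IsHermitian) {μ : Fin n → ℝ} (hμ : IsOrderedSpectrum M μ) :
    ∃ W ∈ orthogonalGroup (Fin n) ℝ, M = W * diagonal μ * Wᵀ := by
  set U : Matrix (Fin n) (Fin n) ℝ := (hM.eigenvectorUnitary : Matrix (Fin n) (Fin n) ℝ)
  have hU : U ∈ orthogonalGroup (Fin n) ℝ := hM.eigenvectorUnitary.2
  have hMU : M = U * diagonal hM.eigenvalues * Uᵀ := by
    simpa [Unitary.conjStarAlgAut_apply, U, star_eq_conjTranspose] using hM.spectral_theorem
  have hroots : Finset.univ.val.map μ = Finset.univ.val.map hM.eigenvalues := by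
    have h := hM.roots_charpoly_eq_eigenvalues
    rw [hμ.2, Polynomial.roots_prod _ _ <| by simp [Finset.prod_ne_zero_iff, X_sub_C_ne_zero]] at h
    simpa [Polynomial.roots_X_sub_C] using h
  set σ := Tuple.sort hM.eigenvalues
  refine ⟨U.submatrix id σ, ?_, ?_⟩
  · rw [mem_orthogonalGroup_iff'] at hU ⊢
    rw [transpose_submatrix, ← submatrix_mul _ _ _ _ _ Function.bijective_id, hU,
      submatrix_one_equiv]
  · rw [Tuple.eq_comp_sort_of_monotone hμ.1 hroots, ← submatrix_diagonal_equiv,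
      transpose_submatrix, submatrix_mul_equiv _ _ _ σ, submatrix_mul_equiv _ _ _ σ]
    simpa using hMU

lemma dotProduct_mul_diagonal_mul_transpose_mulVec (W : Matrix (Fin n) (Fin n) ℝ)
    (d x : Fin n → ℝ) :
    x ⬝ᵥ (W * diagonal d * Wᵀ) *ᵥ x = ∑ i, d i * (Wᵀ *ᵥ x) i ^ 2 := by
  rw [← mulVec_mulVec, ← mulVec_mulVec, dotProduct_mulVec, ← mulVec_transpose,
    dotProduct]
  exact Finset.sum_congr rfl fun i _ => by rw [mulVec_diagonal]; ring

lemma sum_sq_transpose_mulVec {W : Matrix (Fin n) (Fin n) ℝ}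
    (hW : W ∈ orthogonalGroup (Fin n) ℝ) (x : Fin n → ℝ) :
    ∑ i, (Wᵀ *ᵥ x) i ^ 2 = x ⬝ᵥ x := by
  rw [mem_orthogonalGroup_iff] at hW
  simpa [hW, dotProduct, sq] using (dotProduct_mul_diagonal_mul_transpose_mulVec W 1 x).symm

lemma Monotone.sum_mul_sq_le {μ z : Fin n → ℝ} (hμ : Monotone μ) {p : Fin n}
    (hz : ∀ i, p < i → z i = 0) : ∑ i, μ i * z i ^ 2 ≤ μ p * ∑ i, z i ^ 2 := by
  rw [Finset.mul_sum]
  refine Finset.sum_le_sum fun i _ => ?_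
  rcases le_or_gt i p with hi | hi
  · exact mul_le_mul_of_nonneg_right (hμ hi) (sq_nonneg _)
  · simp [hz i hi]

lemma Monotone.mul_sum_sq_le {μ z : Fin n → ℝ} (hμ : Monotone μ) {p : Fin n}
    (hz : ∀ i < p, z i = 0) : μ p * ∑ i, z i ^ 2 ≤ ∑ i, μ i * z i ^ 2 := by
  rw [Finset.mul_sum]
  refine Finset.sum_le_sum fun i _ => ?_
  rcases lt_or_ge i p with hi | hi
  · simp [hz i hi]
  · exact mul_le_mul_of_nonneg_right (hμ hi) (sq_nonneg _)

lemma exists_ne_zero_mulVec_eq_zero_of_lt_of_gt {K : Type*} [Field K]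
    (V W : Matrix (Fin n) (Fin n) K) (p : Fin n) :
    ∃ x ≠ 0, (∀ i < p, (V *ᵥ x) i = 0) ∧ ∀ i, p < i → (W *ᵥ x) i = 0 := by
  set B : Matrix (Fin n) (Fin n) K := of fun i => if i < p then V i else if p < i then W i else 0
  obtain ⟨x, hx, hBx⟩ := exists_mulVec_eq_zero_iff.mpr <|
    det_eq_zero_of_row_eq_zero (A := B) p fun j => by simp [B]
  refine ⟨x, hx, fun i hi => ?_, fun i hi => ?_⟩
  · simpa [B, hi, mulVec] using congrFun hBx i
  · simpa [B, hi, hi.not_gt, mulVec] using congrFun hBx i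

lemma sq_dotProduct_le (w x : Fin n → ℝ) : (w ⬝ᵥ x) ^ 2 ≤ (w ⬝ᵥ w) * (x ⬝ᵥ x) := by
  simpa only [dotProduct, sq] using Finset.sum_mul_sq_le_sq_mul_sq Finset.univ w x

/-- The test vector `x` is orthogonal to the eigenvectors of `N` below `p` and to those of `M`
above `p` (only `n - 1` linear conditions), so that `ν p xᵀx ≤ xᵀNx` and `xᵀMx ≤ μ p xᵀx`. -/
lemma IsOrderedSpectrum.le_add_of_dotProduct_mulVec_le {M N : Matrix (Fin n) (Fin n) ℝ}
    (hM : M.IsHermitian) (hN : N.IsHermitian) {μ ν : Fin n → ℝ}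
    (hμ : IsOrderedSpectrum M μ) (hν : IsOrderedSpectrum N ν) {c : ℝ}
    (h : ∀ x, x ⬝ᵥ N *ᵥ x ≤ x ⬝ᵥ M *ᵥ x + c * (x ⬝ᵥ x)) (p : Fin n) :
    ν p ≤ μ p + c := by
  obtain ⟨W, hW, rfl⟩ := exists_orthogonal_eq_mul_diagonal_mul_transpose hM hμ
  obtain ⟨V, hV, rfl⟩ := exists_orthogonal_eq_mul_diagonal_mul_transpose hN hν
  obtain ⟨x, hx, hVx, hWx⟩ := exists_ne_zero_mulVec_eq_zero_of_lt_of_gt Vᵀ Wᵀ p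
  have hxx : 0 < x ⬝ᵥ x := (Finset.sum_nonneg fun i _ => mul_self_nonneg (x i)).lt_of_ne
    (Ne.symm (dotProduct_self_eq_zero.not.mpr hx))
  have hNx : ν p * (x ⬝ᵥ x) ≤ x ⬝ᵥ (V * diagonal ν * Vᵀ) *ᵥ x := by
    rw [dotProduct_mul_diagonal_mul_transpose_mulVec, ← sum_sq_transpose_mulVec hV]
    exact hν.1.mul_sum_sq_le hVx
  have hMx : x ⬝ᵥ (W * diagonal μ * Wᵀ) *ᵥ x ≤ μ p * (x ⬝ᵥ x) := by
    rw [dotProduct_mul_diagonal_mul_transpose_mulVec, ← sum_sq_transpose_mulVec hW]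
    exact hμ.1.sum_mul_sq_le hWx
  nlinarith [h x]

end Spectrum

section Laplacian

variable {n : ℕ}

def incidenceVector (A : Matrix (Fin n) (Fin n) ℝ) (u v : Fin n) : Fin n → ℝ :=
  Pi.single u 1 - A u v • Pi.single v 1

lemma deleteEdge_apply (A : Matrix (Fin n) (Fin n) ℝ) (u v i j : Fin n) :
    deleteEdge A u v i j = if (i = u ∧ j = v) ∨ (i = v ∧ j = u) then 0 else A i j :=
  rfl

lemma deleteEdge_comm (A : Matrix (Fin n) (Fin n) ℝ) (u v : Fin n) :
    deleteEdge A u v = deleteEdge A v u := by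
  ext i j
  simp only [deleteEdge_apply, or_comm]

variable {A : Matrix (Fin n) (Fin n) ℝ} {u v : Fin n}

lemma Matrix.IsSymm.deleteEdge (hA : A.IsSymm) (u v : Fin n) : (deleteEdge A u v).IsSymm := by
  ext i j
  simp only [transpose_apply, deleteEdge_apply, hA.apply i j]
  exact if_congr (by tauto) rfl rfl

lemma Matrix.IsSymm.lap_isHermitian (hA : A.IsSymm) : (lap A).IsHermitian := by
  rw [isHermitian_iff_isSymm, IsSymm, lap, transpose_sub, diagonal_transpose, hA.eq]

lemma deg_deleteEdge_of_ne {i : Fin n} (hiu : i ≠ u) (hiv : i ≠ v) :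
    deg (deleteEdge A u v) i = deg A i := by
  simp [deg, deleteEdge_apply, hiu, hiv]

lemma deg_eq_deg_deleteEdge_add_one (huv : u ≠ v) (he : A u v ≠ 0) :
    deg A u = deg (deleteEdge A u v) u + 1 := by
  have hnbr : {j | A u j ≠ 0} = insert v {j | deleteEdge A u v u j ≠ 0} := by
    ext j
    by_cases hj : j = v <;> simp [deleteEdge_apply, hj, he, huv]
  rw [deg, hnbr, Set.ncard_insert_of_notMem (by simp [deleteEdge_apply]) (Set.toFinite _), deg]

lemma IsSignedAdj.mul_self_eq_one (hA : IsSignedAdj A) (he : A u v ≠ 0) : A u v * A u v = 1 := by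
  rcases hA.2.2 u v with h | h | h <;> simp_all

lemma lap_eq_lap_deleteEdge_add_vecMulVec (hA : IsSignedAdj A) (huv : u ≠ v) (he : A u v ≠ 0) :
    lap A = lap (deleteEdge A u v) + vecMulVec (incidenceVector A u v) (incidenceVector A u v) := by
  have hvu : A v u = A u v := hA.1.apply u v
  have hss := hA.mul_self_eq_one he
  have hdu := deg_eq_deg_deleteEdge_add_one huv he
  have hdv := deg_eq_deg_deleteEdge_add_one huv.symm (hvu ▸ he)
  rw [← deleteEdge_comm] at hdv
  ext i j
  by_cases hij : i = j
  · subst hij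
    by_cases hiu : i = u
    · subst hiu
      simp [lap, deleteEdge_apply, incidenceVector, vecMulVec_apply, hdu, huv]
      ring
    by_cases hiv : i = v
    · subst hiv
      simp [lap, deleteEdge_apply, incidenceVector, vecMulVec_apply, hdv, hiu, hss]
      ring
    simp [lap, deleteEdge_apply, incidenceVector, vecMulVec_apply, deg_deleteEdge_of_ne hiu hiv,
      hiu, hiv]
  · simp only [lap, Matrix.sub_apply, Matrix.add_apply, diagonal_apply_ne _ hij, deleteEdge_apply,
      incidenceVector, vecMulVec_apply, Pi.sub_apply, Pi.smul_apply, Pi.single_apply, smul_eq_mul]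
    split_ifs <;> simp_all

lemma IsSignedAdj.incidenceVector_dotProduct_self (hA : IsSignedAdj A) (huv : u ≠ v)
    (he : A u v ≠ 0) : incidenceVector A u v ⬝ᵥ incidenceVector A u v = 2 := by
  norm_num [incidenceVector, huv, huv.symm, hA.mul_self_eq_one he]

lemma dotProduct_lap_mulVec_eq (hA : IsSignedAdj A) (huv : u ≠ v) (he : A u v ≠ 0)
    (x : Fin n → ℝ) :
    x ⬝ᵥ lap A *ᵥ x =
      x ⬝ᵥ lap (deleteEdge A u v) *ᵥ x + (incidenceVector A u v ⬝ᵥ x) ^ 2 := by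
  rw [lap_eq_lap_deleteEdge_add_vecMulVec hA huv he, add_mulVec, dotProduct_add,
    vecMulVec_mulVec]
  simp [dotProduct_comm x, sq]

end Laplacian

/-- deleting one edge (of either sign),
beta_p <= alpha_p <= beta_p + 2 for p = 1,...,m. -/
theorem stmt2 (m : ℕ) (A : Matrix (Fin m) (Fin m) ℝ) (hA : IsSignedAdj A)
    (u v : Fin m) (huv : u ≠ v) (he : A u v ≠ 0)
    (α β : Fin m → ℝ)
    (hα : IsOrderedSpectrum (lap A) α)
    (hβ : IsOrderedSpectrum (lap (deleteEdge A u v)) β) :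
    ∀ p : Fin m, β p ≤ α p ∧ α p ≤ β p + 2 := by
  have hL := hA.1.lap_isHermitian
  have hL' := (hA.1.deleteEdge u v).lap_isHermitian
  have hquad := dotProduct_lap_mulVec_eq hA huv he
  have hw := hA.incidenceVector_dotProduct_self huv he
  intro p
  constructor
  · simpa using hα.le_add_of_dotProduct_mulVec_le hL hL' hβ (c := 0) (fun x => by
      nlinarith [hquad x, sq_nonneg (incidenceVector A u v ⬝ᵥ x)]) p
  · exact hβ.le_add_of_dotProduct_mulVec_le hL' hL hα (fun x => by
      nlinarith [hquad x, sq_dotProduct_le (incidenceVector A u v) x]) p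
end

section
/- Let m ≥ 3. Let (C_{m+1}, σ_1) be a signed cycle on vertices v_1, v_2, …, v_{m+1} (with edges v_iv_{i+1} for 1 ≤ i ≤ m and the edge v_1v_{m+1}) with ordered Laplacian spectrum (α_1, α_2, …, α_{m+1}), and let (C_m, σ_2) be the signed cycle on vertices v_1, v_2, …, v_m (with edges v_iv_{i+1} for 1 ≤ i ≤ m−1 and the edge v_1v_m) whose signature satisfies σ_2(e) = σ_1(e) for every edge e of C_m other than v_1v_m, while σ_2(v_1v_m) ∈ {+1, −1} is arbitrary. If (β_1, β_2, …, β_m) is the ordered Laplacian spectrum of (C_m, σ_2), then α_p − 1 ≤ β_p ≤ α_{p+1} + 2 for every p = 1, 2, …, m. -/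
open Polynomial

/-- A signed cycle on `Fin n` (`n >= 3`): vertices `i` and `j` are adjacent iff their
indices are consecutive modulo `n`. -/
def IsSignedCycle {n : ℕ} (A : Matrix (Fin n) (Fin n) ℝ) : Prop :=
  IsSignedAdj A ∧ ∀ i j : Fin n, A i j ≠ 0 ↔ ((i.val + 1) % n = j.val ∨ (j.val + 1) % n = i.val)

/-! Let `L'` be the Laplacian of `(C_{m+1}, σ₁)` restricted to `v₁, …, v_m`. Both cycles are
2-regular and agree on the path `v₁ ⋯ v_m`, so `L' - L(C_m, σ₂)` is supported on the two entries
of the edge `v₁v_m`, and the quadratic forms of `L'` and `L(C_m, σ₂)` differ by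
`2 σ₂(v₁v_m) x₁ x_m`, which is at most `‖x‖²` in absolute value. The Courant–Fischer argument
behind Cauchy interlacing then goes through with this error term: a nonzero `x` orthogonal to the
eigenvectors of `L(C_m, σ₂)` above `β_p` and, after extension by `0`, to those of
`L(C_{m+1}, σ₁)` below `α_p` exists by counting constraints, and comparing Rayleigh quotients at
`x` gives `α_p - 1 ≤ β_p`; symmetrically `β_p ≤ α_{p+1} + 1`. -/

open Matrix Polynomial

theorem eq_of_monotone_of_prod_X_sub_C_eq {n : ℕ} {f g : Fin n → ℝ} (hf : Monotone f)
    (hg : Monotone g) (h : ∏ i, (X - C (f i)) = ∏ i, (X - C (g i))) : f = g := by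
  have hroots : ∀ f : Fin n → ℝ, (∏ i, (X - C (f i))).roots = Multiset.map f Finset.univ.val := by
    intro f
    rw [Polynomial.roots_prod _ _ (by simp [Finset.prod_ne_zero_iff, X_sub_C_ne_zero])]
    simp
  have hmap := hroots f
  rw [h, hroots g, Fin.univ_val_map, Fin.univ_val_map, Multiset.coe_eq_coe] at hmap
  exact List.ofFn_injective (hmap.symm.eq_of_sortedLE hf.sortedLE_ofFn hg.sortedLE_ofFn)

theorem IsOrderedSpectrum.exists_orthonormalBasis {n : ℕ} {M : Matrix (Fin n) (Fin n) ℝ}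
    {μ : Fin n → ℝ} (hM : M.IsSymm) (h : IsOrderedSpectrum M μ) :
    ∃ b : OrthonormalBasis (Fin n) ℝ (EuclideanSpace ℝ (Fin n)), ∀ i, M *ᵥ b i = μ i • b i := by
  have hH : M.IsHermitian := isHermitian_iff_isSymm.mpr hM
  set σ := Tuple.sort hH.eigenvalues
  have hμ : μ = hH.eigenvalues ∘ σ := by
    refine eq_of_monotone_of_prod_X_sub_C_eq h.1 (Tuple.monotone_sort _) ?_
    rw [← h.2, hH.charpoly_eq]
    exact (Equiv.prod_comp σ fun i => X - C (hH.eigenvalues i)).symm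
  refine ⟨hH.eigenvectorBasis.reindex σ.symm, fun i => ?_⟩
  rw [OrthonormalBasis.reindex_apply, Equiv.symm_symm, hH.mulVec_eigenvectorBasis, hμ]
  rfl

theorem OrthonormalBasis.sum_dotProduct_smul {ι : Type*} [Fintype ι]
    (b : OrthonormalBasis ι ℝ (EuclideanSpace ℝ ι)) (x : ι → ℝ) :
    ∑ i, (b i ⬝ᵥ x) • ⇑(b i) = x := by
  have := congrArg WithLp.ofLp (b.sum_repr' (WithLp.toLp 2 x))
  simpa [EuclideanSpace.inner_eq_star_dotProduct, dotProduct_comm] using this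

section RayleighQuotient

variable {ι : Type*} [Fintype ι] {M : Matrix ι ι ℝ} {μ : ι → ℝ}
  {b : OrthonormalBasis ι ℝ (EuclideanSpace ℝ ι)}

theorem OrthonormalBasis.dotProduct_self_eq_sum (b : OrthonormalBasis ι ℝ (EuclideanSpace ℝ ι))
    (x : ι → ℝ) : x ⬝ᵥ x = ∑ i, (b i ⬝ᵥ x) ^ 2 := by
  conv_lhs => arg 1; rw [← b.sum_dotProduct_smul x]
  simp only [sum_dotProduct, smul_dotProduct, smul_eq_mul, sq]

theorem dotProduct_mulVec_eq_sum (hb : ∀ i, M *ᵥ b i = μ i • b i) (x : ι → ℝ) :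
    x ⬝ᵥ (M *ᵥ x) = ∑ i, μ i * (b i ⬝ᵥ x) ^ 2 := by
  conv_lhs => arg 2; rw [← b.sum_dotProduct_smul x]
  simp only [mulVec_sum, mulVec_smul, hb, smul_smul, dotProduct_sum, dotProduct_smul,
    smul_eq_mul]
  exact Finset.sum_congr rfl fun i _ => by rw [dotProduct_comm x]; ring

variable [LinearOrder ι]

theorem dotProduct_mulVec_le_mul_dotProduct_self (hb : ∀ i, M *ᵥ b i = μ i • b i)
    (hμ : Monotone μ) {p : ι} {x : ι → ℝ} (hx : ∀ i, p < i → b i ⬝ᵥ x = 0) :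
    x ⬝ᵥ (M *ᵥ x) ≤ μ p * (x ⬝ᵥ x) := by
  rw [dotProduct_mulVec_eq_sum hb, b.dotProduct_self_eq_sum, Finset.mul_sum]
  refine Finset.sum_le_sum fun i _ => ?_
  rcases le_or_gt i p with hip | hpi
  · exact mul_le_mul_of_nonneg_right (hμ hip) (sq_nonneg _)
  · simp [hx i hpi]

theorem mul_dotProduct_self_le_dotProduct_mulVec (hb : ∀ i, M *ᵥ b i = μ i • b i)
    (hμ : Monotone μ) {p : ι} {x : ι → ℝ} (hx : ∀ i, i < p → b i ⬝ᵥ x = 0) :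
    μ p * (x ⬝ᵥ x) ≤ x ⬝ᵥ (M *ᵥ x) := by
  rw [dotProduct_mulVec_eq_sum hb, b.dotProduct_self_eq_sum, Finset.mul_sum]
  refine Finset.sum_le_sum fun i _ => ?_
  rcases le_or_gt p i with hpi | hip
  · exact mul_le_mul_of_nonneg_right (hμ hpi) (sq_nonneg _)
  · simp [hx i hip]

end RayleighQuotient

theorem exists_ne_zero_forall_dotProduct_eq_zero {K ι κ : Type*} [Field K] [Fintype ι]
    [Fintype κ] (f : ι → κ → K) (h : Fintype.card ι < Fintype.card κ) :
    ∃ x ≠ 0, ∀ i, f i ⬝ᵥ x = 0 := by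
  have hker : LinearMap.ker (Matrix.of f).mulVecLin ≠ ⊥ :=
    LinearMap.ker_ne_bot_of_finrank_lt (by simpa using h)
  obtain ⟨x, hx, hx0⟩ := Submodule.exists_mem_ne_zero_of_ne_bot hker
  exact ⟨x, hx0, fun i => congrFun (LinearMap.mem_ker.mp hx) i⟩

theorem snoc_zero_dotProduct {R : Type*} [NonUnitalNonAssocSemiring R] {n : ℕ} (x : Fin n → R)
    (y : Fin (n + 1) → R) : (Fin.snoc x 0 : Fin (n + 1) → R) ⬝ᵥ y = x ⬝ᵥ (y ∘ Fin.castSucc) := by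
  simp [dotProduct, Fin.sum_univ_castSucc]

theorem snoc_zero_dotProduct_mulVec {R : Type*} [CommSemiring R] {n : ℕ}
    (M : Matrix (Fin (n + 1)) (Fin (n + 1)) R) (x : Fin n → R) :
    (Fin.snoc x 0 : Fin (n + 1) → R) ⬝ᵥ (M *ᵥ Fin.snoc x 0) =
      x ⬝ᵥ (M.submatrix Fin.castSucc Fin.castSucc *ᵥ x) := by
  rw [snoc_zero_dotProduct]
  congr 1
  ext i
  simp only [Function.comp_apply, mulVec, dotProduct_comm (M _), snoc_zero_dotProduct]
  exact dotProduct_comm _ _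

section Interlacing

variable {n : ℕ} {M : Matrix (Fin (n + 1)) (Fin (n + 1)) ℝ} {N : Matrix (Fin n) (Fin n) ℝ}
  {α : Fin (n + 1) → ℝ} {β : Fin n → ℝ} {c : ℝ}

theorem IsOrderedSpectrum.sub_le_of_abs_dotProduct_mulVec_sub_le (hM : M.IsSymm) (hN : N.IsSymm)
    (hα : IsOrderedSpectrum M α) (hβ : IsOrderedSpectrum N β)
    (hc : ∀ x, |x ⬝ᵥ (M.submatrix Fin.castSucc Fin.castSucc *ᵥ x) - x ⬝ᵥ (N *ᵥ x)| ≤ c * (x ⬝ᵥ x))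
    (p : Fin n) : α p.castSucc - c ≤ β p := by
  obtain ⟨u, hu⟩ := hα.exists_orthonormalBasis hM
  obtain ⟨w, hw⟩ := hβ.exists_orthonormalBasis hN
  obtain ⟨x, hx0, hx⟩ := exists_ne_zero_forall_dotProduct_eq_zero
    (Sum.elim (fun i : Finset.Ioi p => ⇑(w i))
      (fun j : Finset.Iio p.castSucc => ⇑(u j) ∘ Fin.castSucc)) (by
        simp only [Fintype.card_sum, Fintype.card_coe, Fin.card_Ioi, Fin.card_Iio,
          Fintype.card_fin, Fin.val_castSucc]
        omega)
  have hM' : α p.castSucc * (x ⬝ᵥ x) ≤ x ⬝ᵥ (M.submatrix Fin.castSucc Fin.castSucc *ᵥ x) := by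
    have := mul_dotProduct_self_le_dotProduct_mulVec hu hα.1 (p := p.castSucc)
      (x := Fin.snoc x 0) fun j hj => by
        rw [dotProduct_comm, snoc_zero_dotProduct, dotProduct_comm]
        exact hx (.inr ⟨j, Finset.mem_Iio.mpr hj⟩)
    rwa [snoc_zero_dotProduct_mulVec, snoc_zero_dotProduct, Fin.snoc_comp_castSucc] at this
  have hN' : x ⬝ᵥ (N *ᵥ x) ≤ β p * (x ⬝ᵥ x) :=
    dotProduct_mulVec_le_mul_dotProduct_self hw hβ.1 fun i hi =>
      hx (.inl ⟨i, Finset.mem_Ioi.mpr hi⟩)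
  have hclose := (abs_le.mp (hc x)).2
  have : α p.castSucc * (x ⬝ᵥ x) ≤ (β p + c) * (x ⬝ᵥ x) := by linarith
  linarith [le_of_mul_le_mul_right this (by simpa using dotProduct_self_star_pos_iff.mpr hx0)]

theorem IsOrderedSpectrum.le_add_of_abs_dotProduct_mulVec_sub_le (hM : M.IsSymm) (hN : N.IsSymm)
    (hα : IsOrderedSpectrum M α) (hβ : IsOrderedSpectrum N β)
    (hc : ∀ x, |x ⬝ᵥ (M.submatrix Fin.castSucc Fin.castSucc *ᵥ x) - x ⬝ᵥ (N *ᵥ x)| ≤ c * (x ⬝ᵥ x))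
    (p : Fin n) : β p ≤ α p.succ + c := by
  obtain ⟨u, hu⟩ := hα.exists_orthonormalBasis hM
  obtain ⟨w, hw⟩ := hβ.exists_orthonormalBasis hN
  obtain ⟨x, hx0, hx⟩ := exists_ne_zero_forall_dotProduct_eq_zero
    (Sum.elim (fun i : Finset.Iio p => ⇑(w i))
      (fun j : Finset.Ioi p.succ => ⇑(u j) ∘ Fin.castSucc)) (by
        simp only [Fintype.card_sum, Fintype.card_coe, Fin.card_Ioi, Fin.card_Iio,
          Fintype.card_fin, Fin.val_succ]
        omega)
  have hM' : x ⬝ᵥ (M.submatrix Fin.castSucc Fin.castSucc *ᵥ x) ≤ α p.succ * (x ⬝ᵥ x) := by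
    have := dotProduct_mulVec_le_mul_dotProduct_self hu hα.1 (p := p.succ)
      (x := Fin.snoc x 0) fun j hj => by
        rw [dotProduct_comm, snoc_zero_dotProduct, dotProduct_comm]
        exact hx (.inr ⟨j, Finset.mem_Ioi.mpr hj⟩)
    rwa [snoc_zero_dotProduct_mulVec, snoc_zero_dotProduct, Fin.snoc_comp_castSucc] at this
  have hN' : β p * (x ⬝ᵥ x) ≤ x ⬝ᵥ (N *ᵥ x) :=
    mul_dotProduct_self_le_dotProduct_mulVec hw hβ.1 fun i hi =>
      hx (.inl ⟨i, Finset.mem_Iio.mpr hi⟩)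
  have hclose := (abs_le.mp (hc x)).1
  have : β p * (x ⬝ᵥ x) ≤ (α p.succ + c) * (x ⬝ᵥ x) := by linarith
  exact le_of_mul_le_mul_right this (by simpa using dotProduct_self_star_pos_iff.mpr hx0)

end Interlacing

theorem abs_dotProduct_mulVec_le_of_support_subset_pair {ι : Type*} [Fintype ι] [DecidableEq ι]
    {E : Matrix ι ι ℝ} {a b : ι} (hab : a ≠ b)
    (hE : ∀ i j, E i j ≠ 0 → (i = a ∧ j = b) ∨ (i = b ∧ j = a)) (hba : E b a = E a b)
    (hEab : |E a b| ≤ 1) (x : ι → ℝ) : |x ⬝ᵥ (E *ᵥ x)| ≤ x ⬝ᵥ x := by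
  have hEsingle : E = E a b • (single a b 1 + single b a 1) := by
    ext i j
    by_cases hij : E i j = 0
    · rcases eq_or_ne i a with rfl | hia <;> rcases eq_or_ne i b with rfl | hib <;>
        simp_all [single_apply, eq_comm]
    · rcases hE i j hij with ⟨rfl, rfl⟩ | ⟨rfl, rfl⟩ <;> simp [hab, hab.symm, hba]
  have hquad : x ⬝ᵥ (E *ᵥ x) = 2 * E a b * (x a * x b) := by
    conv_lhs => rw [hEsingle]
    rw [smul_mulVec, add_mulVec, single_mulVec_eq, single_mulVec_eq]
    simp only [dotProduct_smul, dotProduct_add, dotProduct_single, smul_eq_mul]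
    ring
  have hpair : x a ^ 2 + x b ^ 2 ≤ x ⬝ᵥ x := by
    rw [← Finset.sum_pair (f := fun i => x i ^ 2) hab]
    simpa [dotProduct, sq] using Finset.sum_le_sum_of_subset_of_nonneg (Finset.subset_univ _)
      fun i _ _ => mul_self_nonneg (x i)
  rw [hquad, abs_mul, abs_mul, abs_two]
  calc 2 * |E a b| * |x a * x b| ≤ 2 * 1 * |x a * x b| := by gcongr
    _ ≤ x a ^ 2 + x b ^ 2 := by
      rw [abs_mul, mul_one, ← mul_assoc, ← sq_abs (x a), ← sq_abs (x b)]
      exact two_mul_le_add_sq _ _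
    _ ≤ x ⬝ᵥ x := hpair

theorem succ_mod_eq_or_succ_mod_eq_iff {n i j : ℕ} (hi : i < n) (hj : j < n) :
    ((i + 1) % n = j ∨ (j + 1) % n = i) ↔
      j = i + 1 ∨ i = j + 1 ∨ (i = 0 ∧ j + 1 = n) ∨ (j = 0 ∧ i + 1 = n) := by
  have hsucc : ∀ k < n, (k + 1) % n = if k + 1 = n then 0 else k + 1 := fun k hk => by
    split_ifs with h
    · rw [h, Nat.mod_self]
    · exact Nat.mod_eq_of_lt (by omega)
  rw [hsucc i hi, hsucc j hj]
  split_ifs <;> omega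

theorem lap_isSymm {n : ℕ} {A : Matrix (Fin n) (Fin n) ℝ} (hA : A.IsSymm) : (lap A).IsSymm :=
  (isSymm_diagonal _).sub hA

namespace IsSignedCycle

variable {n : ℕ} {A : Matrix (Fin n) (Fin n) ℝ}

theorem apply_ne_zero_iff (hA : IsSignedCycle A) (i j : Fin n) :
    A i j ≠ 0 ↔ j.val = i.val + 1 ∨ i.val = j.val + 1 ∨ (i.val = 0 ∧ j.val + 1 = n) ∨
      (j.val = 0 ∧ i.val + 1 = n) :=
  (hA.2 i j).trans (succ_mod_eq_or_succ_mod_eq_iff i.isLt j.isLt)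

theorem deg_eq_two (hn : 3 ≤ n) (hA : IsSignedCycle A) (i : Fin n) : deg A i = 2 := by
  let next : Fin n := ⟨if i.val + 1 = n then 0 else i.val + 1, by split_ifs <;> omega⟩
  let prev : Fin n := ⟨if i.val = 0 then n - 1 else i.val - 1, by split_ifs <;> omega⟩
  have hne : next ≠ prev := by
    simp only [ne_eq, next, prev, Fin.ext_iff]
    split_ifs <;> omega
  have hnbrs : {j | A i j ≠ 0} = {next, prev} := by
    ext j
    simp only [Set.mem_ofPred_eq, hA.apply_ne_zero_iff, Set.mem_insert_iff,
      Set.mem_singleton_iff, Fin.ext_iff, next, prev]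
    split_ifs <;> omega
  rw [deg, hnbrs, Set.ncard_pair hne]

theorem lap_eq (hn : 3 ≤ n) (hA : IsSignedCycle A) : lap A = diagonal (fun _ => 2) - A := by
  simp only [lap, hA.deg_eq_two hn]
  norm_num

end IsSignedCycle

section CycleDeletion

variable {m : ℕ} {A : Matrix (Fin (m + 1)) (Fin (m + 1)) ℝ} {B : Matrix (Fin m) (Fin m) ℝ}

theorem IsSignedCycle.eq_ends_of_sub_submatrix_castSucc_apply_ne_zero (hA : IsSignedCycle A)
    (hB : IsSignedCycle B)
    (hagree : ∀ i j : Fin m, (j.val = i.val + 1 ∨ i.val = j.val + 1) →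
      B i j = A i.castSucc j.castSucc) (i j : Fin m)
    (hij : (B - A.submatrix Fin.castSucc Fin.castSucc) i j ≠ 0) :
    (i.val = 0 ∧ j.val + 1 = m) ∨ (j.val = 0 ∧ i.val + 1 = m) := by
  by_contra hwrap
  apply hij
  rw [Matrix.sub_apply, submatrix_apply, sub_eq_zero]
  by_cases hpath : j.val = i.val + 1 ∨ i.val = j.val + 1
  · exact hagree i j hpath
  · have hB0 : B i j = 0 := by
      by_contra h
      have := (hB.apply_ne_zero_iff i j).mp h
      omega
    have hA0 : A i.castSucc j.castSucc = 0 := by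
      by_contra h
      have := (hA.apply_ne_zero_iff _ _).mp h
      simp only [Fin.val_castSucc] at this
      omega
    rw [hB0, hA0]

theorem IsSignedCycle.abs_dotProduct_lap_submatrix_castSucc_sub_le (hm : 3 ≤ m)
    (hA : IsSignedCycle A) (hB : IsSignedCycle B)
    (hagree : ∀ i j : Fin m, (j.val = i.val + 1 ∨ i.val = j.val + 1) →
      B i j = A i.castSucc j.castSucc) (x : Fin m → ℝ) :
    |x ⬝ᵥ ((lap A).submatrix Fin.castSucc Fin.castSucc *ᵥ x) - x ⬝ᵥ (lap B *ᵥ x)| ≤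
      1 * (x ⬝ᵥ x) := by
  let first : Fin m := ⟨0, by omega⟩
  let last : Fin m := ⟨m - 1, by omega⟩
  have hlap : (lap A).submatrix Fin.castSucc Fin.castSucc - lap B =
      B - A.submatrix Fin.castSucc Fin.castSucc := by
    ext i j
    simp only [hA.lap_eq (by omega), hB.lap_eq hm, Matrix.sub_apply, submatrix_apply,
      diagonal_apply, Fin.castSucc_inj]
    ring
  have hA0 : A first.castSucc last.castSucc = 0 := by
    by_contra h
    have := (hA.apply_ne_zero_iff _ _).mp h
    simp only [Fin.val_castSucc, first, last] at this
    omega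
  rw [← dotProduct_sub, ← sub_mulVec, hlap, one_mul]
  refine abs_dotProduct_mulVec_le_of_support_subset_pair (a := first) (b := last)
    (fun h => by have := congrArg Fin.val h; simp only [first, last] at this; omega)
    (fun i j hij => ?_) ?_ ?_ x
  · rcases hA.eq_ends_of_sub_submatrix_castSucc_apply_ne_zero hB hagree i j hij with
      ⟨hi, hj⟩ | ⟨hj, hi⟩
    · exact .inl ⟨Fin.ext hi, Fin.ext (show j.val = m - 1 by omega)⟩
    · exact .inr ⟨Fin.ext (show i.val = m - 1 by omega), Fin.ext hj⟩
  · simp only [Matrix.sub_apply, submatrix_apply, hB.1.1.apply, hA.1.1.apply]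
  · rw [Matrix.sub_apply, submatrix_apply, hA0, sub_zero, abs_le]
    rcases hB.1.2.2 first last with h | h | h <;> rw [h] <;> norm_num

end CycleDeletion

/-- signed cycles (C_{m+1},sigma1) on v_1,...,v_{m+1} and (C_m,sigma2) on
v_1,...,v_m, with sigma2 agreeing with sigma1 on every edge of C_m except possibly
v_1 v_m (whose sign is arbitrary); then alpha_p - 1 <= beta_p <= alpha_{p+1} + 2. -/
theorem stmt3 (m : ℕ) (hm : 3 ≤ m)
    (A : Matrix (Fin (m+1)) (Fin (m+1)) ℝ) (hA : IsSignedCycle A)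
    (B : Matrix (Fin m) (Fin m) ℝ) (hB : IsSignedCycle B)
    (hagree : ∀ i j : Fin m, (j.val = i.val + 1 ∨ i.val = j.val + 1) →
      B i j = A i.castSucc j.castSucc)
    (α : Fin (m+1) → ℝ) (β : Fin m → ℝ)
    (hα : IsOrderedSpectrum (lap A) α) (hβ : IsOrderedSpectrum (lap B) β) :
    ∀ p : Fin m, α p.castSucc - 1 ≤ β p ∧ β p ≤ α p.succ + 2 := by
  intro p
  have hclose := hA.abs_dotProduct_lap_submatrix_castSucc_sub_le hm hB hagree
  have hLA := lap_isSymm hA.1.1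
  have hLB := lap_isSymm hB.1.1
  refine ⟨hα.sub_le_of_abs_dotProduct_mulVec_sub_le hLA hLB hβ hclose p, ?_⟩
  linarith [hα.le_add_of_abs_dotProduct_mulVec_sub_le hLA hLB hβ hclose p]
end

section
/- Let Γ be a signed graph of order m+1 with ordered net-Laplacian spectrum (α_1, α_2, …, α_{m+1}), and let Γ' be the signed graph of order m obtained from Γ by deleting any one vertex together with all its incident edges, with ordered net-Laplacian spectrum (β_1, β_2, …, β_m). Then α_p − 1 ≤ β_p ≤ α_{p+1} + 1 for every p = 1, 2, …, m. -/
open Polynomial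

/-!
Write `N` for the net-Laplacian of `Γ` and `N'` for that of `Γ - v`. Restricting `N` to the
coordinates other than `v` gives `N' + D`, where `D` is diagonal with entries `A u v ∈ {-1, 0, 1}`
(the edge `uv` no longer contributes to the signed degree of `u`). Hence for `y` extended by zero
at `v` to `Ey`, the Rayleigh quotients of `N` at `Ey` and of `N'` at `y` differ by at most `1`.
The bounds then follow from the min–max dimension count: the span of the eigenvectors of `N'` with
eigenvalue `≥ β p` (dimension `≥ m - p`) and that of the eigenvectors of `N` with eigenvalue
`≤ α (p + 1)` (dimension `≥ p + 2`) meet after embedding by `E`, and comparing Rayleigh quotients at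
a common nonzero vector gives `β p ≤ α (p + 1) + 1`; the lower bound is symmetric.
-/

open Matrix Module Finset Polynomial

theorem Submodule.exists_ne_zero_mem_of_finrank_lt {K U V : Type*} [Field K] [AddCommGroup U]
    [Module K U] [AddCommGroup V] [Module K V] [FiniteDimensional K U] [FiniteDimensional K V]
    {E : U →ₗ[K] V} (hE : Function.Injective E) {P : Submodule K U} {Q : Submodule K V}
    (h : finrank K V < finrank K P + finrank K Q) :
    ∃ y ∈ P, y ≠ 0 ∧ E y ∈ Q := by
  have hP : finrank K (P.map E) = finrank K P :=
    (Submodule.equivMapOfInjective E hE P).finrank_eq.symm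
  have hPQ : ¬Disjoint (P.map E) Q := fun hd => by
    have := Submodule.finrank_add_finrank_le_of_disjoint hd
    omega
  obtain ⟨x, hxP, hxQ, hx⟩ : ∃ x ∈ P.map E, x ∈ Q ∧ x ≠ 0 := by
    simpa [Submodule.disjoint_def] using hPQ
  obtain ⟨y, hy, rfl⟩ := Submodule.mem_map.mp hxP
  exact ⟨y, hy, fun h => hx (by simp [h]), hxQ⟩

theorem injective_of_dotProduct_self_eq {ι κ : Type*} [Fintype ι] [Fintype κ]
    {E : (ι → ℝ) →ₗ[ℝ] (κ → ℝ)} (hE : ∀ y, E y ⬝ᵥ E y = y ⬝ᵥ y) : Function.Injective E :=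
  (injective_iff_map_eq_zero E).mpr fun y hy =>
    dotProduct_self_eq_zero.mp (by rw [← hE, hy, zero_dotProduct])

section ExtendByZero

variable {R ι η : Type*} [CommSemiring R] [Fintype ι] [Fintype η] {s : ι → η}

theorem extend_zero_dotProduct (hs : Function.Injective s) (y : ι → R) (w : η → R) :
    Function.extend s y 0 ⬝ᵥ w = y ⬝ᵥ (w ∘ s) :=
  (Fintype.sum_of_injective s hs _ _
    (fun j hj => by simp [Function.extend_apply' _ _ _ hj])
    (fun i => by simp [hs.extend_apply])).symm

theorem extend_zero_dotProduct_mulVec (hs : Function.Injective s) (M : Matrix η η R)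
    (y : ι → R) :
    Function.extend s y 0 ⬝ᵥ M *ᵥ Function.extend s y 0 = y ⬝ᵥ M.submatrix s s *ᵥ y := by
  rw [extend_zero_dotProduct hs]
  congr 1
  ext i
  rw [Function.comp_apply, mulVec, dotProduct_comm, extend_zero_dotProduct hs, dotProduct_comm]
  rfl

theorem extend_zero_dotProduct_self (hs : Function.Injective s) (y : ι → R) :
    Function.extend s y 0 ⬝ᵥ Function.extend s y 0 = y ⬝ᵥ y := by
  rw [extend_zero_dotProduct hs]
  congr 1
  ext i
  exact hs.extend_apply y 0 i

end ExtendByZero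

theorem abs_dotProduct_diagonal_mulVec_le {ι : Type*} [Fintype ι] [DecidableEq ι]
    {d : ι → ℝ} {c : ℝ} (hd : ∀ i, |d i| ≤ c) (y : ι → ℝ) :
    |y ⬝ᵥ diagonal d *ᵥ y| ≤ c * (y ⬝ᵥ y) := by
  simp only [mulVec_diagonal, dotProduct, Finset.mul_sum]
  refine (Finset.abs_sum_le_sum_abs _ _).trans (Finset.sum_le_sum fun i _ => ?_)
  rw [show y i * (d i * y i) = d i * (y i * y i) by ring, abs_mul, abs_mul_self]
  exact mul_le_mul_of_nonneg_right (hd i) (mul_self_nonneg _)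

namespace Matrix.IsHermitian

variable {ι : Type*} [Fintype ι] [DecidableEq ι] {M : Matrix ι ι ℝ} (hM : M.IsHermitian)

theorem eigenvectorBasis_dotProduct (i j : ι) :
    ⇑(hM.eigenvectorBasis i) ⬝ᵥ ⇑(hM.eigenvectorBasis j) = if i = j then 1 else 0 := by
  rw [← orthonormal_iff_ite.mp hM.eigenvectorBasis.orthonormal i j,
    EuclideanSpace.inner_eq_star_dotProduct, dotProduct_comm]
  rfl

theorem sum_smul_eigenvectorBasis_dotProduct {κ : Type*} [Fintype κ] {g : κ → ι}
    (hg : Function.Injective g) (a b : κ → ℝ) :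
    (∑ k, a k • ⇑(hM.eigenvectorBasis (g k))) ⬝ᵥ (∑ k, b k • ⇑(hM.eigenvectorBasis (g k))) =
      ∑ k, a k * b k := by
  classical
  simp only [sum_dotProduct, dotProduct_sum, smul_dotProduct, dotProduct_smul,
    eigenvectorBasis_dotProduct, hg.eq_iff, smul_eq_mul, mul_ite, mul_one, mul_zero,
    Finset.sum_ite_eq', Finset.mem_univ, if_true, mul_comm]

noncomputable def eigenvectorSpan (S : Finset ι) : Submodule ℝ (ι → ℝ) :=
  Submodule.span ℝ (Set.range fun i : S => ⇑(hM.eigenvectorBasis i))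

theorem finrank_eigenvectorSpan (S : Finset ι) : finrank ℝ (hM.eigenvectorSpan S) = #S := by
  have hli : LinearIndependent ℝ fun i : S => ⇑(hM.eigenvectorBasis i) :=
    (hM.eigenvectorBasis.orthonormal.linearIndependent.map' _
      (WithLp.linearEquiv 2 ℝ (ι → ℝ)).ker).comp _ Subtype.val_injective
  rw [eigenvectorSpan, finrank_span_eq_card hli, Fintype.card_coe]

theorem exists_coeffs_of_mem_eigenvectorSpan {S : Finset ι} {x : ι → ℝ}
    (hx : x ∈ hM.eigenvectorSpan S) :
    ∃ a : S → ℝ, x ⬝ᵥ M *ᵥ x = ∑ i : S, hM.eigenvalues i * a i ^ 2 ∧ x ⬝ᵥ x = ∑ i, a i ^ 2 := by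
  obtain ⟨a, rfl⟩ := (Submodule.mem_span_range_iff_exists_fun ℝ).mp hx
  have hMx : M *ᵥ ∑ i, a i • ⇑(hM.eigenvectorBasis i) =
      ∑ i : S, (hM.eigenvalues i * a i) • ⇑(hM.eigenvectorBasis i) := by
    simp only [mulVec_sum, mulVec_smul, mulVec_eigenvectorBasis, smul_smul, mul_comm]
  refine ⟨a, ?_, ?_⟩ <;>
    simp only [hMx, sum_smul_eigenvectorBasis_dotProduct hM Subtype.val_injective] <;>
    exact Finset.sum_congr rfl fun i _ => by ring

theorem le_dotProduct_mulVec_of_mem_eigenvectorSpan {S : Finset ι} {c : ℝ}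
    (hc : ∀ i ∈ S, c ≤ hM.eigenvalues i) {x : ι → ℝ} (hx : x ∈ hM.eigenvectorSpan S) :
    c * (x ⬝ᵥ x) ≤ x ⬝ᵥ M *ᵥ x := by
  obtain ⟨a, hMx, hxx⟩ := hM.exists_coeffs_of_mem_eigenvectorSpan hx
  rw [hMx, hxx, Finset.mul_sum]
  exact Finset.sum_le_sum fun i _ => mul_le_mul_of_nonneg_right (hc i i.2) (sq_nonneg _)

theorem dotProduct_mulVec_le_of_mem_eigenvectorSpan {S : Finset ι} {c : ℝ}
    (hc : ∀ i ∈ S, hM.eigenvalues i ≤ c) {x : ι → ℝ} (hx : x ∈ hM.eigenvectorSpan S) :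
    x ⬝ᵥ M *ᵥ x ≤ c * (x ⬝ᵥ x) := by
  obtain ⟨a, hMx, hxx⟩ := hM.exists_coeffs_of_mem_eigenvectorSpan hx
  rw [hMx, hxx, Finset.mul_sum]
  exact Finset.sum_le_sum fun i _ => mul_le_mul_of_nonneg_right (hc i i.2) (sq_nonneg _)

end Matrix.IsHermitian

namespace IsOrderedSpectrum

variable {n : ℕ} {M : Matrix (Fin n) (Fin n) ℝ} {μ : Fin n → ℝ}

theorem map_eigenvalues (hμ : IsOrderedSpectrum M μ) (hM : M.IsHermitian) :
    univ.val.map hM.eigenvalues = univ.val.map μ := by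
  have h := hM.roots_charpoly_eq_eigenvalues
  rw [hμ.2, roots_prod _ _ (prod_ne_zero_iff.mpr fun i _ => X_sub_C_ne_zero (μ i))] at h
  simpa using h.symm

theorem card_filter_eigenvalues (hμ : IsOrderedSpectrum M μ) (hM : M.IsHermitian)
    (P : ℝ → Prop) [DecidablePred P] : #{i | P (hM.eigenvalues i)} = #{i | P (μ i)} := by
  have h := congrArg (Multiset.countP P) (hμ.map_eigenvalues hM)
  rwa [Multiset.countP_map, Multiset.countP_map] at h

theorem sub_le_card_le_eigenvalues (hμ : IsOrderedSpectrum M μ) (hM : M.IsHermitian)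
    (q : Fin n) : n - q ≤ #{i | μ q ≤ hM.eigenvalues i} := by
  rw [hμ.card_filter_eigenvalues hM (μ q ≤ ·), ← Fin.card_Ici]
  exact card_le_card fun i hi => mem_filter.mpr ⟨mem_univ i, hμ.1 (mem_Ici.mp hi)⟩

theorem succ_le_card_eigenvalues_le (hμ : IsOrderedSpectrum M μ) (hM : M.IsHermitian)
    (q : Fin n) : q + 1 ≤ #{i | hM.eigenvalues i ≤ μ q} := by
  rw [hμ.card_filter_eigenvalues hM (· ≤ μ q), ← Fin.card_Iic]
  exact card_le_card fun i hi => mem_filter.mpr ⟨mem_univ i, hμ.1 (mem_Iic.mp hi)⟩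

variable {k : ℕ} {M' : Matrix (Fin k) (Fin k) ℝ} {α : Fin n → ℝ} {β : Fin k → ℝ}
  {E : (Fin k → ℝ) →ₗ[ℝ] (Fin n → ℝ)}

/-- `hpq` is what makes the eigenvector spans of `M'` above `β p` (dimension `≥ k - p`) and of `M`
below `α q` (dimension `≥ q + 1`) meet inside `Fin n → ℝ`. -/
theorem le_add_of_le_compression (hα : IsOrderedSpectrum M α) (hβ : IsOrderedSpectrum M' β)
    (hM : M.IsHermitian) (hM' : M'.IsHermitian) (hE : ∀ y, E y ⬝ᵥ E y = y ⬝ᵥ y) {δ : ℝ}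
    (h : ∀ y, y ⬝ᵥ M' *ᵥ y ≤ E y ⬝ᵥ M *ᵥ E y + δ * (y ⬝ᵥ y))
    {p : Fin k} {q : Fin n} (hpq : n + p ≤ k + q) : β p ≤ α q + δ := by
  have hdim := hβ.sub_le_card_le_eigenvalues hM' p
  have hdim' := hα.succ_le_card_eigenvalues_le hM q
  obtain ⟨y, hy, hy0, hEy⟩ := Submodule.exists_ne_zero_mem_of_finrank_lt
    (injective_of_dotProduct_self_eq hE)
    (P := hM'.eigenvectorSpan {j | β p ≤ hM'.eigenvalues j})
    (Q := hM.eigenvectorSpan {i | hM.eigenvalues i ≤ α q})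
    (by simp only [IsHermitian.finrank_eigenvectorSpan, finrank_fin_fun]; omega)
  have hlow := hM'.le_dotProduct_mulVec_of_mem_eigenvectorSpan (fun j hj => (mem_filter.mp hj).2) hy
  have hupp := hM.dotProduct_mulVec_le_of_mem_eigenvectorSpan (fun i hi => (mem_filter.mp hi).2) hEy
  rw [hE] at hupp
  have hyy : 0 < y ⬝ᵥ y := by simpa using dotProduct_self_star_pos_iff.mpr hy0
  nlinarith [h y]

theorem le_add_of_compression_le (hα : IsOrderedSpectrum M α) (hβ : IsOrderedSpectrum M' β)
    (hM : M.IsHermitian) (hM' : M'.IsHermitian) (hE : ∀ y, E y ⬝ᵥ E y = y ⬝ᵥ y) {δ : ℝ}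
    (h : ∀ y, E y ⬝ᵥ M *ᵥ E y ≤ y ⬝ᵥ M' *ᵥ y + δ * (y ⬝ᵥ y))
    {p : Fin k} {q : Fin n} (hqp : (q : ℕ) ≤ p) : α q ≤ β p + δ := by
  have hdim := hβ.succ_le_card_eigenvalues_le hM' p
  have hdim' := hα.sub_le_card_le_eigenvalues hM q
  obtain ⟨y, hy, hy0, hEy⟩ := Submodule.exists_ne_zero_mem_of_finrank_lt
    (injective_of_dotProduct_self_eq hE)
    (P := hM'.eigenvectorSpan {j | hM'.eigenvalues j ≤ β p})
    (Q := hM.eigenvectorSpan {i | α q ≤ hM.eigenvalues i})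
    (by simp only [IsHermitian.finrank_eigenvectorSpan, finrank_fin_fun]; omega)
  have hupp := hM'.dotProduct_mulVec_le_of_mem_eigenvectorSpan (fun j hj => (mem_filter.mp hj).2) hy
  have hlow := hM.le_dotProduct_mulVec_of_mem_eigenvectorSpan (fun i hi => (mem_filter.mp hi).2) hEy
  rw [hE] at hlow
  have hyy : 0 < y ⬝ᵥ y := by simpa using dotProduct_self_star_pos_iff.mpr hy0
  nlinarith [h y]

end IsOrderedSpectrum

theorem isHermitian_netLap {n : ℕ} {A : Matrix (Fin n) (Fin n) ℝ} (hA : A.IsSymm) :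
    (netLap A).IsHermitian :=
  isHermitian_iff_isSymm.mpr ((isSymm_diagonal _).sub hA)

theorem netLap_submatrix_succAbove {m : ℕ} (A : Matrix (Fin (m + 1)) (Fin (m + 1)) ℝ)
    (v : Fin (m + 1)) :
    (netLap A).submatrix v.succAbove v.succAbove =
      netLap (deleteVertex A v) + diagonal fun i => A (v.succAbove i) v := by
  ext i j
  rcases eq_or_ne i j with rfl | hij
  · simp only [netLap, deleteVertex, submatrix_apply, Matrix.sub_apply, Matrix.add_apply,
      diagonal_apply_eq, Fin.sum_univ_succAbove (fun k => A (v.succAbove i) k) v]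
    ring
  · simp [netLap, deleteVertex, diagonal_apply_ne _ hij,
      diagonal_apply_ne _ (Fin.succAbove_right_injective.ne hij)]

theorem abs_netLap_compression_sub_le {m : ℕ} {A : Matrix (Fin (m + 1)) (Fin (m + 1)) ℝ}
    {v : Fin (m + 1)} (hA : ∀ u, |A u v| ≤ 1) (y : Fin m → ℝ) :
    |Function.extend v.succAbove y 0 ⬝ᵥ netLap A *ᵥ Function.extend v.succAbove y 0 -
      y ⬝ᵥ netLap (deleteVertex A v) *ᵥ y| ≤ 1 * (y ⬝ᵥ y) := by
  rw [extend_zero_dotProduct_mulVec Fin.succAbove_right_injective, netLap_submatrix_succAbove,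
    add_mulVec, dotProduct_add, add_sub_cancel_left]
  exact abs_dotProduct_diagonal_mulVec_le (fun i => hA _) y

/-- deleting any vertex, the ordered net-Laplacian spectra satisfy
alpha_p - 1 <= beta_p <= alpha_{p+1} + 1 for p = 1,...,m. -/
theorem stmt11 (m : ℕ) (A : Matrix (Fin (m+1)) (Fin (m+1)) ℝ) (hA : IsSignedAdj A)
    (v : Fin (m+1)) (α : Fin (m+1) → ℝ) (β : Fin m → ℝ)
    (hα : IsOrderedSpectrum (netLap A) α)
    (hβ : IsOrderedSpectrum (netLap (deleteVertex A v)) β) :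
    ∀ p : Fin m, α p.castSucc - 1 ≤ β p ∧ β p ≤ α p.succ + 1 := by
  intro p
  have hN := isHermitian_netLap hA.1
  have hN' := isHermitian_netLap (hA.1.submatrix v.succAbove)
  have hE := extend_zero_dotProduct_self (R := ℝ) (Fin.succAbove_right_injective (p := v))
  have hentry (u : Fin (m + 1)) : |A u v| ≤ 1 := by
    rcases hA.2.2 u v with h | h | h <;> simp [h]
  have hcomp y := abs_sub_le_iff.mp (abs_netLap_compression_sub_le hentry y)
  constructor
  · have := hα.le_add_of_compression_le hβ hN hN' (E := Function.ExtendByZero.linearMap ℝ _) hE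
      (fun y => sub_le_iff_le_add'.mp (hcomp y).1) (p := p) (q := p.castSucc) le_rfl
    linarith
  · exact hα.le_add_of_le_compression hβ hN hN' (E := Function.ExtendByZero.linearMap ℝ _) hE
      (fun y => sub_le_iff_le_add'.mp (hcomp y).2) (by simp; omega)
end
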